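/- Let F be an n×n real matrix with all entries nonnegative and let V be an n×n real matrix that is Metzler and Hurwitz. Then ρ(F V⁻¹) = inf { r ∈ ℝ : r > 0 and there exists a vector w ∈ ℝⁿ with all entries strictly positive such that (F + rV) w < 0 entrywise }. -/

import Mathlib

/-!
Put `W = -V⁻¹`. Shifting the Metzler matrix `V` by a large multiple `s` of the identity makes it
nonnegative; by Perron–Frobenius the shifted matrix has a real eigenvalue `ρ` of maximal modulus,
and `ρ - s` is an eigenvalue of `V`, so Hurwitz stability gives `ρ < s`. The Neumann series of
`(s - (V + s))⁻¹ = W` then has nonnegative terms, so `W ≥ 0`.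

With `M = F W ≥ 0` we have `F V⁻¹ = -M`, and the substitution `u = -V w` turns
`w > 0, (F + r V) w < 0` into `u > 0, M u < r u`. Such a `u` exists exactly when `r > ρ(M)`:
an eigenvector estimate (Collatz–Wielandt) gives one direction, `u = (r - M)⁻¹ 1` the other.
Hence the set in question is the open ray `(ρ(M), ∞)`.
-/

open Matrix

/-- A square real matrix is *Metzler* if all its off-diagonal entries are nonnegative. -/
def IsMetzler {n : ℕ} (A : Matrix (Fin n) (Fin n) ℝ) : Prop :=
  ∀ i j, i ≠ j → 0 ≤ A i j

/-- A square real matrix is *Hurwitz* if every complex eigenvalue has negative real part. -/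
def IsHurwitz {n : ℕ} (A : Matrix (Fin n) (Fin n) ℝ) : Prop :=
  ∀ μ ∈ spectrum ℂ (A.map Complex.ofReal), μ.re < 0

/-- The spectral radius of a square real matrix: the maximum modulus of its complex
eigenvalues. -/
noncomputable def specRad {n : ℕ} (A : Matrix (Fin n) (Fin n) ℝ) : ℝ :=
  sSup {x : ℝ | ∃ μ ∈ spectrum ℂ (A.map Complex.ofReal), x = ‖μ‖}

open Filter
open scoped NNReal

theorem spectrum.eventually_nnnorm_pow_le {A : Type*} [NormedRing A] [NormedAlgebra ℂ A]
    [CompleteSpace A] {a : A} {c : ℝ≥0} (h : spectralRadius ℂ a < c) :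
    ∀ᶠ k : ℕ in atTop, ‖a ^ k‖₊ ≤ c ^ k := by
  filter_upwards [(pow_nnnorm_pow_one_div_tendsto_nhds_spectralRadius a).eventually_lt_const h,
    eventually_gt_atTop 0] with k hk hk0
  rw [one_div, ENNReal.rpow_inv_lt_iff (by positivity), ENNReal.rpow_natCast] at hk
  exact_mod_cast hk.le

namespace Matrix

variable {ι : Type*} [Fintype ι]

theorem mulVec_mono {R : Type*} [Semiring R] [PartialOrder R] [IsOrderedRing R]
    {A : Matrix ι ι R} (hA : ∀ i j, 0 ≤ A i j) {x y : ι → R} (hxy : x ≤ y) :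
    A *ᵥ x ≤ A *ᵥ y :=
  fun i => Finset.sum_le_sum fun j _ => mul_le_mul_of_nonneg_left (hxy j) (hA i j)

theorem mulVec_nonneg {R : Type*} [Semiring R] [PartialOrder R] [IsOrderedRing R]
    {A : Matrix ι ι R} (hA : ∀ i j, 0 ≤ A i j) {x : ι → R} (hx : 0 ≤ x) : 0 ≤ A *ᵥ x :=
  fun i => Finset.sum_nonneg fun j _ => mul_nonneg (hA i j) (hx j)

theorem norm_mul_norm_le_mulVec_norm {A : Matrix ι ι ℝ} (hA : ∀ i j, 0 ≤ A i j) {x : ι → ℂ}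
    {μ : ℂ} (hx : A.map Complex.ofReal *ᵥ x = μ • x) (i : ι) :
    ‖μ‖ * ‖x i‖ ≤ (A *ᵥ fun j => ‖x j‖) i :=
  calc ‖μ‖ * ‖x i‖ = ‖∑ j, (A i j : ℂ) * x j‖ := by
        rw [← norm_mul, ← smul_eq_mul, ← Pi.smul_apply, ← hx]; rfl
    _ ≤ ∑ j, ‖(A i j : ℂ) * x j‖ := norm_sum_le _ _
    _ = (A *ᵥ fun j => ‖x j‖) i := by
        simp [mulVec, dotProduct, abs_of_nonneg (hA _ _)]

variable [DecidableEq ι]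

theorem exists_mulVec_eq_smul_of_mem_spectrum {K : Type*} [Field K] {A : Matrix ι ι K} {μ : K}
    (hμ : μ ∈ spectrum K A) : ∃ x : ι → K, x ≠ 0 ∧ A *ᵥ x = μ • x := by
  rw [← Matrix.spectrum_toLin', ← Module.End.hasEigenvalue_iff_mem_spectrum] at hμ
  obtain ⟨x, hx⟩ := hμ.exists_hasEigenvector
  exact ⟨x, hx.2, by simpa using hx.apply_eq_smul⟩

theorem ofReal_mem_spectrum_map_iff {A : Matrix ι ι ℝ} {r : ℝ} :
    (r : ℂ) ∈ spectrum ℂ (A.map Complex.ofReal) ↔ r ∈ spectrum ℝ A := by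
  rw [mem_spectrum_iff_isRoot_charpoly, mem_spectrum_iff_isRoot_charpoly, Polynomial.IsRoot.def,
    Polynomial.IsRoot.def]
  change Polynomial.eval (Complex.ofRealHom r) (A.map Complex.ofRealHom).charpoly = 0 ↔ _
  rw [charpoly_map, Polynomial.eval_map_apply, map_eq_zero_iff _ Complex.ofRealHom.injective]

theorem mulVec_pos_of_mul_eq_one {W X : Matrix ι ι ℝ} (hW : ∀ i j, 0 ≤ W i j)
    (hWX : W * X = 1) {u : ι → ℝ} (hu : ∀ i, 0 < u i) (i : ι) : 0 < (W *ᵥ u) i := by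
  refine (mulVec_nonneg hW (fun j => (hu j).le) i).lt_of_ne fun h0 => ?_
  have hrow : ∀ j, W i j = 0 := fun j =>
    (mul_eq_zero.1 (((Finset.sum_eq_zero_iff_of_nonneg fun j _ =>
      mul_nonneg (hW i j) (hu j).le).1 h0.symm) j (Finset.mem_univ j))).resolve_right (hu j).ne'
  simpa [mul_apply, hrow] using congrFun (congrFun hWX i) i

theorem norm_lt_of_mem_spectrum_of_mulVec_lt {A : Matrix ι ι ℝ} (hA : ∀ i j, 0 ≤ A i j)
    {u : ι → ℝ} (hu : ∀ i, 0 < u i) {r : ℝ} (hAu : ∀ i, (A *ᵥ u) i < r * u i) {μ : ℂ}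
    (hμ : μ ∈ spectrum ℂ (A.map Complex.ofReal)) : ‖μ‖ < r := by
  obtain ⟨x, hx0, hx⟩ := exists_mulVec_eq_smul_of_mem_spectrum hμ
  obtain ⟨j, hj⟩ := Function.ne_iff.1 hx0
  obtain ⟨i, -, hi⟩ := Finset.exists_max_image Finset.univ (fun i => ‖x i‖ / u i)
    ⟨j, Finset.mem_univ j⟩
  set t := ‖x i‖ / u i
  have ht : 0 < t := (div_pos (norm_pos_iff.2 hj) (hu j)).trans_le (hi j (Finset.mem_univ j))
  have hxt : (fun j => ‖x j‖) ≤ t • u := fun j =>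
    (div_le_iff₀ (hu j)).1 (hi j (Finset.mem_univ j))
  have hxi : 0 < ‖x i‖ := by simpa [t, hu i] using ht
  refine lt_of_mul_lt_mul_right ?_ hxi.le
  calc ‖μ‖ * ‖x i‖ ≤ (A *ᵥ fun j => ‖x j‖) i := norm_mul_norm_le_mulVec_norm hA hx i
    _ ≤ (A *ᵥ (t • u)) i := mulVec_mono hA hxt i
    _ = t * (A *ᵥ u) i := by rw [mulVec_smul, Pi.smul_apply, smul_eq_mul]
    _ < t * (r * u i) := mul_lt_mul_of_pos_left (hAu i) ht
    _ = r * ‖x i‖ := by rw [mul_left_comm, div_mul_cancel₀ _ (hu i).ne']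

theorem summable_inv_smul_pow {A : Matrix ι ι ℝ} {r : ℝ} (hr : 0 < r)
    (h : ∀ μ ∈ spectrum ℂ (A.map Complex.ofReal), ‖μ‖ < r) :
    Summable fun k => (r⁻¹ • A) ^ k := by
  -- Gelfand's formula needs a Banach-algebra norm; the ℓ∞ operator norm is one and bounds entries.
  let : NormedRing (Matrix ι ι ℂ) := Matrix.linftyOpNormedRing
  let : NormedAlgebra ℂ (Matrix ι ι ℂ) := Matrix.linftyOpNormedAlgebra
  have : CompleteSpace (Matrix ι ι ℂ) := FiniteDimensional.complete ℂ _
  set a := A.map Complex.ofReal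
  have ha : spectralRadius ℂ a < r.toNNReal := by
    rcases (spectrum ℂ a).eq_empty_or_nonempty with he | hne
    · simp [spectralRadius, he, hr]
    · refine spectrum.spectralRadius_lt_of_forall_lt_of_nonempty hne fun μ hμ => ?_
      rw [← NNReal.coe_lt_coe, coe_nnnorm, Real.coe_toNNReal _ hr.le]
      exact h μ hμ
  obtain ⟨c, hac, hcr⟩ := ENNReal.lt_iff_exists_nnreal_btwn.1 ha
  have hcr : (c : ℝ) < r := (Real.lt_toNNReal_iff_coe_lt).1 (ENNReal.coe_lt_coe.1 hcr)
  have hentry : ∀ k i j, |(A ^ k) i j| ≤ ‖a ^ k‖ := fun k i j =>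
    calc |(A ^ k) i j| = ‖(a ^ k *ᵥ Pi.single j 1) i‖ := by
          have hpow : a ^ k = (A ^ k).map Complex.ofReal :=
            (Matrix.map_pow A Complex.ofRealHom k).symm
          rw [mulVec_single_one, col_apply, hpow, map_apply, Complex.norm_real, Real.norm_eq_abs]
      _ ≤ ‖a ^ k *ᵥ Pi.single j 1‖ := norm_le_pi_norm _ i
      _ ≤ ‖a ^ k‖ * ‖(Pi.single j 1 : ι → ℂ)‖ := linfty_opNorm_mulVec _ _
      _ = ‖a ^ k‖ := by rw [Pi.norm_single, norm_one, mul_one]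
  refine Pi.summable.2 fun i => Pi.summable.2 fun j => ?_
  refine Summable.of_norm_bounded_eventually_nat
    (summable_geometric_of_lt_one (by positivity) ((div_lt_one hr).2 hcr)) ?_
  filter_upwards [spectrum.eventually_nnnorm_pow_le hac] with k hk
  calc ‖((r⁻¹ • A) ^ k) i j‖ = r⁻¹ ^ k * |(A ^ k) i j| := by
        rw [smul_pow, smul_apply, smul_eq_mul, Real.norm_eq_abs, abs_mul,
          abs_of_pos (by positivity)]
    _ ≤ r⁻¹ ^ k * c ^ k := by gcongr; exact (hentry k i j).trans (by exact_mod_cast hk)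
    _ = (c / r) ^ k := by rw [div_eq_inv_mul, mul_pow]

theorem exists_nonneg_right_inv_smul_one_sub {A : Matrix ι ι ℝ}
    (hA : ∀ i j, 0 ≤ A i j) {r : ℝ} (hr : 0 < r)
    (h : ∀ μ ∈ spectrum ℂ (A.map Complex.ofReal), ‖μ‖ < r) :
    ∃ S : Matrix ι ι ℝ, (r • 1 - A) * S = 1 ∧ ∀ i j, 0 ≤ S i j := by
  have hs := summable_inv_smul_pow hr h
  refine ⟨r⁻¹ • ∑' k, (r⁻¹ • A) ^ k, ?_, fun i j => ?_⟩
  · rw [Matrix.mul_smul, ← Matrix.smul_mul, smul_sub, smul_smul, inv_mul_cancel₀ hr.ne', one_smul]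
    exact hs.one_sub_mul_tsum_pow
  · have hA' : ∀ i j, 0 ≤ (r⁻¹ • A) i j := fun i j => mul_nonneg (inv_nonneg.2 hr.le) (hA i j)
    exact mul_nonneg (inv_nonneg.2 hr.le)
      ((Pi.hasSum.1 (Pi.hasSum.1 hs.hasSum i) j).nonneg fun k => pow_apply_nonneg hA' k i j)

theorem ofReal_norm_mem_spectrum {A : Matrix ι ι ℝ} (hA : ∀ i j, 0 ≤ A i j)
    {μ : ℂ} (hμ : μ ∈ spectrum ℂ (A.map Complex.ofReal))
    (hmax : ∀ ν ∈ spectrum ℂ (A.map Complex.ofReal), ‖ν‖ ≤ ‖μ‖) :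
    (‖μ‖ : ℂ) ∈ spectrum ℂ (A.map Complex.ofReal) := by
  -- If `ρ • 1 - A` were invertible, `(ρ • 1 - A)⁻¹ ≥ 0` as the limit of `(t • 1 - A)⁻¹ ≥ 0`,
  -- `t ↓ ρ`; applied to `|x|`, which satisfies `A |x| ≥ ρ |x|`, this forces `|x| ≤ 0`.
  set ρ := ‖μ‖
  by_contra hρ
  rw [ofReal_mem_spectrum_map_iff, spectrum.mem_iff, not_not, Algebra.algebraMap_eq_smul_one,
    isUnit_iff_isUnit_det] at hρ
  have hR : ∀ t, ρ < t → ∀ i j, 0 ≤ (t • 1 - A)⁻¹ i j := fun t ht => by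
    obtain ⟨S, hS, hS0⟩ := exists_nonneg_right_inv_smul_one_sub hA
      ((norm_nonneg μ).trans_lt ht) fun ν hν => (hmax ν hν).trans_lt ht
    rwa [inv_eq_right_inv hS]
  have hRρ : ∀ i j, 0 ≤ (ρ • 1 - A)⁻¹ i j := fun i j => by
    have hinv := continuousAt_matrix_inv (ρ • 1 - A)
      (by rw [Ring.inverse_eq_inv']; exact continuousAt_inv₀ hρ.ne_zero)
    have hcont : ContinuousAt (fun t : ℝ => (t • 1 - A)⁻¹ i j) ρ :=
      (continuous_apply_apply i j).continuousAt.comp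
        (hinv.comp (f := fun t : ℝ => t • (1 : Matrix ι ι ℝ) - A) (by fun_prop))
    exact ge_of_tendsto (hcont.tendsto.mono_left (nhdsWithin_le_nhds (s := Set.Ioi ρ)))
      (eventually_nhdsWithin_of_forall fun t ht => hR t ht i j)
  obtain ⟨x, hx0, hx⟩ := exists_mulVec_eq_smul_of_mem_spectrum hμ
  set y : ι → ℝ := fun j => ‖x j‖
  have hy : (ρ • 1 - A) *ᵥ y ≤ 0 := fun i => by
    simpa [sub_mulVec, smul_mulVec] using norm_mul_norm_le_mulVec_norm hA hx i
  have hy0 : y ≤ 0 :=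
    calc y = (ρ • 1 - A)⁻¹ *ᵥ ((ρ • 1 - A) *ᵥ y) := by
          rw [mulVec_mulVec, nonsing_inv_mul _ hρ, one_mulVec]
      _ ≤ (ρ • 1 - A)⁻¹ *ᵥ 0 := mulVec_mono hRρ hy
      _ = 0 := mulVec_zero _
  exact hx0 (funext fun j => norm_le_zero_iff.1 (hy0 j))

theorem forall_norm_lt_iff_exists_pos_mulVec_lt {A : Matrix ι ι ℝ}
    (hA : ∀ i j, 0 ≤ A i j) {r : ℝ} (hr : 0 < r) :
    (∀ μ ∈ spectrum ℂ (A.map Complex.ofReal), ‖μ‖ < r) ↔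
      ∃ u : ι → ℝ, (∀ i, 0 < u i) ∧ ∀ i, (A *ᵥ u) i < r * u i := by
  refine ⟨fun h => ?_, fun ⟨u, hu, hAu⟩ μ hμ => norm_lt_of_mem_spectrum_of_mulVec_lt hA hu hAu hμ⟩
  obtain ⟨S, hS, hS0⟩ := exists_nonneg_right_inv_smul_one_sub hA hr h
  set u := S *ᵥ fun _ => 1
  have hAu : ∀ i, r * u i = (A *ᵥ u) i + 1 := fun i => by
    have := congrFun (show (r • 1 - A) *ᵥ u = fun _ => 1 by rw [mulVec_mulVec, hS, one_mulVec]) i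
    simp only [sub_mulVec, smul_mulVec, one_mulVec, Pi.sub_apply, Pi.smul_apply,
      smul_eq_mul] at this
    linarith
  have hAu0 : ∀ i, 0 ≤ (A *ᵥ u) i := mulVec_nonneg hA (mulVec_nonneg hS0 fun _ => zero_le_one)
  refine ⟨u, fun i => pos_of_mul_pos_right ?_ hr.le, fun i => by linarith [hAu i]⟩
  linarith [hAu i, hAu0 i]

theorem exists_pos_add_smul_mulVec_neg_iff {F V W : Matrix ι ι ℝ}
    (hF : ∀ i j, 0 ≤ F i j) (hW : ∀ i j, 0 ≤ W i j) (hVW : -V * W = 1) {r : ℝ} (hr : 0 < r) :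
    (∃ w : ι → ℝ, (∀ i, 0 < w i) ∧ ∀ i, ((F + r • V) *ᵥ w) i < 0) ↔
      ∃ u : ι → ℝ, (∀ i, 0 < u i) ∧ ∀ i, ((F * W) *ᵥ u) i < r * u i := by
  have hWV : W * -V = 1 := mul_eq_one_comm.1 hVW
  constructor
  · rintro ⟨w, hw, hFVw⟩
    have hFw : ∀ i, (F *ᵥ w) i < r * (-V *ᵥ w) i := fun i => by
      have := hFVw i
      simp only [add_mulVec, smul_mulVec, neg_mulVec, Pi.add_apply, Pi.smul_apply, Pi.neg_apply,
        smul_eq_mul] at this ⊢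
      linarith
    have hFw0 := mulVec_nonneg hF fun i => (hw i).le
    refine ⟨-V *ᵥ w, fun i => pos_of_mul_pos_right ((hFw0 i).trans_lt (hFw i)) hr.le, fun i => ?_⟩
    rw [← mulVec_mulVec, mulVec_mulVec w W, hWV, one_mulVec]
    exact hFw i
  · rintro ⟨u, hu, hFWu⟩
    refine ⟨W *ᵥ u, mulVec_pos_of_mul_eq_one hW hWV hu, fun i => ?_⟩
    have hVWu : V *ᵥ (W *ᵥ u) = -u := by
      rw [mulVec_mulVec, ← neg_neg (V * W), ← Matrix.neg_mul, hVW, neg_mulVec, one_mulVec]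
    rw [add_mulVec, smul_mulVec, mulVec_mulVec, Pi.add_apply, Pi.smul_apply, hVWu, Pi.neg_apply,
      smul_eq_mul]
    linarith [hFWu i]

end Matrix

theorem IsMetzler.exists_nonneg_right_inv_neg {n : ℕ} {V : Matrix (Fin n) (Fin n) ℝ}
    (hV : IsMetzler V) (hH : IsHurwitz V) :
    ∃ S : Matrix (Fin n) (Fin n) ℝ, -V * S = 1 ∧ ∀ i j, 0 ≤ S i j := by
  set s : ℝ := 1 + ∑ i, |V i i|
  have hs : 0 < s := by positivity
  set A := s • (1 : Matrix (Fin n) (Fin n) ℝ) + V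
  have hA : ∀ i j, 0 ≤ A i j := by
    intro i j
    rcases eq_or_ne i j with rfl | hij
    · have := Finset.single_le_sum (fun j _ => abs_nonneg (V j j)) (Finset.mem_univ i)
      simp only [A, s, Matrix.add_apply, Matrix.smul_apply, one_apply_eq, smul_eq_mul, mul_one]
      linarith [neg_abs_le (V i i)]
    · simpa [A, hij] using hV i j hij
  have hmap : A.map Complex.ofReal = algebraMap ℂ _ (s : ℂ) + V.map Complex.ofReal := by
    ext i j
    rcases eq_or_ne i j with rfl | hij <;> simp [A, algebraMap_eq_diagonal, *]
  have hspec : ∀ ν ∈ spectrum ℂ (A.map Complex.ofReal), ‖ν‖ < s := by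
    intro ν hν
    obtain ⟨μ, hμ, hmax⟩ := Set.exists_max_image _ (‖·‖) (Matrix.finite_spectrum _) ⟨ν, hν⟩
    have hPF := ofReal_norm_mem_spectrum hA hμ hmax
    rw [hmap, ← sub_add_cancel (‖μ‖ : ℂ) s, spectrum.add_mem_add_iff] at hPF
    have hre := hH _ hPF
    simp only [Complex.sub_re, Complex.ofReal_re] at hre
    exact (hmax ν hν).trans_lt (by linarith)
  obtain ⟨S, hS, hS0⟩ := exists_nonneg_right_inv_smul_one_sub hA hs hspec
  exact ⟨S, by rwa [show -V = s • 1 - A by simp [A]], hS0⟩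

theorem specRad_nonneg {n : ℕ} (A : Matrix (Fin n) (Fin n) ℝ) : 0 ≤ specRad A :=
  Real.sSup_nonneg (by rintro _ ⟨μ, -, rfl⟩; exact norm_nonneg μ)

theorem specRad_neg {n : ℕ} (A : Matrix (Fin n) (Fin n) ℝ) : specRad (-A) = specRad A := by
  rw [specRad, specRad, Matrix.map_neg _ Complex.ofReal_neg, ← spectrum.neg_eq]
  congr 1
  ext x
  simp only [Set.mem_ofPred_eq, Set.mem_neg]
  exact ⟨fun ⟨μ, hμ, hx⟩ => ⟨-μ, hμ, by rw [hx, norm_neg]⟩,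
    fun ⟨μ, hμ, hx⟩ => ⟨-μ, by rwa [neg_neg], by rw [hx, norm_neg]⟩⟩

theorem specRad_lt_iff {n : ℕ} (A : Matrix (Fin n) (Fin n) ℝ) {r : ℝ} (hr : 0 < r) :
    specRad A < r ↔ ∀ μ ∈ spectrum ℂ (A.map Complex.ofReal), ‖μ‖ < r := by
  have hset : {x : ℝ | ∃ μ ∈ spectrum ℂ (A.map Complex.ofReal), x = ‖μ‖} =
      (‖·‖) '' spectrum ℂ (A.map Complex.ofReal) := by
    ext
    simp [eq_comm]
  rw [specRad, hset]
  rcases (spectrum ℂ (A.map Complex.ofReal)).eq_empty_or_nonempty with he | hne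
  · simp [he, hr]
  · rw [((Matrix.finite_spectrum _).image _).csSup_lt_iff (hne.image _), Set.forall_mem_image]

/-- `ρ(F V⁻¹) = inf { r > 0 : ∃ w > 0 with (F + rV) w < 0 entrywise }`. -/
theorem specRad_eq_sInf_exists_pos_vec_lt {n : ℕ} (F V : Matrix (Fin n) (Fin n) ℝ)
    (hF : ∀ i j, 0 ≤ F i j) (hVmetzler : IsMetzler V) (hVhurwitz : IsHurwitz V) :
    specRad (F * V⁻¹) =
      sInf {r : ℝ | 0 < r ∧ ∃ w : Fin n → ℝ, (∀ i, 0 < w i) ∧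
        ∀ i, ((F + r • V) *ᵥ w) i < 0} := by
  obtain ⟨W, hVW, hW⟩ := hVmetzler.exists_nonneg_right_inv_neg hVhurwitz
  have hVinv : V⁻¹ = -W := inv_eq_right_inv (by rw [Matrix.mul_neg, ← Matrix.neg_mul, hVW])
  have hFW : ∀ i j, 0 ≤ (F * W) i j := fun i j => by
    rw [mul_apply]
    exact Finset.sum_nonneg fun k _ => mul_nonneg (hF i k) (hW k j)
  have hset : {r : ℝ | 0 < r ∧ ∃ w : Fin n → ℝ, (∀ i, 0 < w i) ∧
      ∀ i, ((F + r • V) *ᵥ w) i < 0} = Set.Ioi (specRad (F * W)) := by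
    ext r
    refine ⟨fun ⟨hr, hw⟩ => ?_, fun h => ?_⟩
    · exact (specRad_lt_iff _ hr).2 ((forall_norm_lt_iff_exists_pos_mulVec_lt hFW hr).2
        ((exists_pos_add_smul_mulVec_neg_iff hF hW hVW hr).1 hw))
    · have hr := (specRad_nonneg _).trans_lt h
      exact ⟨hr, (exists_pos_add_smul_mulVec_neg_iff hF hW hVW hr).2
        ((forall_norm_lt_iff_exists_pos_mulVec_lt hFW hr).1 ((specRad_lt_iff _ hr).1 h))⟩
  rw [hset, csInf_Ioi, hVinv, Matrix.mul_neg, specRad_neg]
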